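/- Let G be a finite cyclic group and H a non-trivial proper subgroup of G. Then for any odd integer k with 1 ≤ k ≤ |H|, H is a (0,k)-regular set of G if and only if |H| is odd or |G:H| is odd. -/

import Mathlib

open Set

/-- An `(a,b)`-regular set in a graph: a nonempty proper subset `D` of the vertex set such
that every vertex in `D` has exactly `a` neighbours in `D` and every vertex outside `D`
has exactly `b` neighbours in `D`. -/
def IsRegularSet {V : Type*} (G : SimpleGraph V) (D : Set V) (a b : ℕ) : Prop :=
  D.Nonempty ∧ D ≠ Set.univ ∧
    (∀ v ∈ D, {u | G.Adj v u ∧ u ∈ D}.ncard = a) ∧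
    (∀ v ∉ D, {u | G.Adj v u ∧ u ∈ D}.ncard = b)

/-- The Cayley graph of a group with connection set `S`: `x ~ y` iff `y * x⁻¹ ∈ S`
(stated symmetrically; when `S` is inverse-closed and `1 ∉ S` this is the usual notion). -/
def cayley {G : Type*} [Group G] (S : Set G) : SimpleGraph G where
  Adj x y := x ≠ y ∧ y * x⁻¹ ∈ S ∧ x * y⁻¹ ∈ S
  symm := ⟨fun x y h => ⟨h.1.symm, h.2.2, h.2.1⟩⟩
  loopless := ⟨fun x h => h.1 rfl⟩

/-- `D` is a `(0,k)`-regular set of the group `G`: it is a `(0,k)`-regular set in some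
Cayley graph of `G` (with inverse-closed connection set avoiding the identity). -/
def IsRegularSetOfGroup (G : Type*) [Group G] (D : Set G) (k : ℕ) : Prop :=
  ∃ S : Set G, (1 : G) ∉ S ∧ (∀ s ∈ S, s⁻¹ ∈ S) ∧ IsRegularSet (cayley S) D 0 k

/-!
In `Cay(G, S)` the neighbours in `H` of a vertex `v` are the elements `s * v` with
`s ∈ S ∩ H v⁻¹`, so `H` is `(0,k)`-regular iff `S` misses `H` and meets every other coset of `H`
in exactly `k` elements. If `|H|` and `|G : H|` are both even, some coset `C ≠ H` satisfies
`C⁻¹ = C`; then `S ∩ C` is inverse-closed of odd size `k`, so it contains an involution, which is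
impossible because the unique involution of the cyclic group `G` lies in `H`.

Conversely, write `G = ⟨g⟩`, `r = |G : H|`, `m = |H|`. The elements `g ^ (j + i * r)` with
`j < r`, `i < m` form an `r × m` grid whose rows are the cosets of `H`, and inversion maps
position `(j, i)` to `(r - j, m - 1 - i)`. Choosing in row `j ≠ 0` the first `k` positions if
`2 j < r`, the last `k` if `2 j > r` and the middle `k` if `2 j = r` (then `m` is odd) gives an
inverse-closed `S` that meets each row `j ≠ 0` in `k` elements.
-/

section CayleyGraph

variable {G : Type*} [Group G] {S : Set G}

theorem cayley_adj_iff (h1 : (1 : G) ∉ S) (hinv : ∀ s ∈ S, s⁻¹ ∈ S) {x y : G} :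
    (cayley S).Adj x y ↔ y * x⁻¹ ∈ S := by
  refine ⟨fun h => h.2.1, fun h => ⟨?_, h, by simpa using hinv _ h⟩⟩
  rintro rfl
  exact h1 (by simpa using h)

theorem cayley_adj_mem_subgroup_eq_image (h1 : (1 : G) ∉ S) (hinv : ∀ s ∈ S, s⁻¹ ∈ S)
    (H : Subgroup G) (v : G) :
    {u | (cayley S).Adj v u ∧ u ∈ (H : Set G)} = (· * v) '' {s ∈ S | s * v ∈ H} := by
  ext u
  simp only [cayley_adj_iff h1 hinv, mem_ofPred_eq, mem_image, SetLike.mem_coe]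
  refine ⟨fun ⟨hu, huH⟩ => ⟨u * v⁻¹, by simpa using ⟨hu, huH⟩, by simp⟩, ?_⟩
  rintro ⟨s, ⟨hs, hsv⟩, rfl⟩
  exact ⟨by simpa using hs, hsv⟩

theorem isRegularSet_cayley_subgroup_iff [Finite G] (h1 : (1 : G) ∉ S)
    (hinv : ∀ s ∈ S, s⁻¹ ∈ S) (H : Subgroup G) (k : ℕ) :
    IsRegularSet (cayley S) H 0 k ↔
      H ≠ ⊤ ∧ (∀ s ∈ S, s ∉ H) ∧ ∀ v ∉ H, {s ∈ S | s * v ∈ H}.ncard = k := by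
  have hcount : ∀ v, {u | (cayley S).Adj v u ∧ u ∈ (H : Set G)}.ncard =
      {s ∈ S | s * v ∈ H}.ncard := fun v => by
    rw [cayley_adj_mem_subgroup_eq_image h1 hinv, (mul_left_injective v).injOn.ncard_image]
  have hin : ∀ v ∈ H, {s ∈ S | s * v ∈ H}.ncard = 0 ↔ ∀ s ∈ S, s ∉ H := fun v hv => by
    rw [ncard_eq_zero (toFinite _), eq_empty_iff_forall_notMem]
    simp [Subgroup.mul_mem_cancel_right H hv]
  simp only [IsRegularSet, hcount]
  simp only [SetLike.mem_coe, Ne, Subgroup.coe_eq_univ]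
  refine ⟨fun ⟨_, htop, h0, hk⟩ => ⟨htop, (hin 1 H.one_mem).1 (h0 1 H.one_mem), hk⟩,
    fun ⟨htop, hS, hk⟩ => ⟨⟨1, H.one_mem⟩, htop, fun v hv => (hin v hv).2 hS, hk⟩⟩

end CayleyGraph

theorem Set.exists_inv_eq_self_of_odd_ncard {α : Type*} [InvolutiveInv α] {T : Set α}
    (hinv : ∀ x ∈ T, x⁻¹ ∈ T) (hodd : Odd T.ncard) : ∃ x ∈ T, x⁻¹ = x := by
  have := (finite_of_ncard_pos hodd.pos).fintype
  let σ : Equiv.Perm T :=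
    (Equiv.inv α).subtypePerm fun x => ⟨fun h => by simpa using hinv _ h, hinv x⟩
  have hσ : σ ^ 2 ^ 1 = 1 := Equiv.ext fun x => Subtype.ext (inv_inv (x : α))
  have hcard : ¬ 2 ∣ Fintype.card T := by
    rw [← Nat.card_eq_fintype_card, Nat.card_coe_set_eq]; exact hodd.not_two_dvd_nat
  obtain ⟨x, hx⟩ := Equiv.Perm.exists_fixed_point_of_prime hcard hσ
  exact ⟨x, x.2, congrArg Subtype.val hx⟩

open scoped IsMulCommutative in
theorem exists_inv_eq_self_notMem_of_isRegularSetOfGroup {G : Type*} [Group G]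
    [IsMulCommutative G] [Finite G] {H : Subgroup G} {k : ℕ} (hk : Odd k)
    (hreg : IsRegularSetOfGroup G H k) {w : G} (hw : w ∉ H) (hw2 : w * w ∈ H) :
    ∃ x ∉ H, x⁻¹ = x := by
  obtain ⟨S, h1, hinv, hreg⟩ := hreg
  obtain ⟨-, hSH, hS⟩ := (isRegularSet_cayley_subgroup_iff h1 hinv H k).1 hreg
  have hTinv : ∀ x ∈ {s ∈ S | s * w ∈ H}, x⁻¹ ∈ {s ∈ S | s * w ∈ H} := by
    rintro x ⟨hxS, hxw⟩
    refine ⟨hinv x hxS, ?_⟩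
    have : x⁻¹ * w = (x * w)⁻¹ * (w * w) := by rw [mul_inv_rev, mul_comm w⁻¹]; group
    exact this ▸ H.mul_mem (H.inv_mem hxw) hw2
  obtain ⟨x, ⟨hxS, -⟩, hx⟩ := exists_inv_eq_self_of_odd_ncard hTinv (hS w hw ▸ hk)
  exact ⟨x, hSH x hxS, hx⟩

section GeneratedGroup

variable {G : Type*} [Group G] {g : G} (H : Subgroup G)

theorem pow_add_mul_index_inv (hg : ∀ x, x ∈ Subgroup.zpowers g) {j i : ℕ}
    (hj : j ≤ H.index) (hi : i < Nat.card H) :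
    (g ^ (j + i * H.index))⁻¹ = g ^ (H.index - j + (Nat.card H - 1 - i) * H.index) := by
  refine (eq_inv_of_mul_eq_one_left ?_).symm
  obtain ⟨t, ht⟩ : ∃ t, Nat.card H = i + 1 + t := ⟨Nat.card H - 1 - i, by omega⟩
  obtain ⟨u, hu⟩ : ∃ u, H.index = j + u := ⟨H.index - j, by omega⟩
  have hsum : H.index - j + (Nat.card H - 1 - i) * H.index + (j + i * H.index) = orderOf g := by
    rw [orderOf_eq_card_of_forall_mem_zpowers hg, ← H.card_mul_index, ht, hu]
    simp only [Nat.add_sub_cancel_left, show i + 1 + t - 1 - i = t by omega]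
    ring
  rw [← pow_add, hsum, pow_orderOf_eq_one]

theorem pow_add_mul_index_injOn (hg : ∀ x, x ∈ Subgroup.zpowers g) {j : ℕ} (hj : j < H.index) :
    InjOn (fun i => g ^ (j + i * H.index)) (Iio (Nat.card H)) := by
  have hlt : ∀ i < Nat.card H, j + i * H.index < orderOf g := fun i hi => by
    rw [orderOf_eq_card_of_forall_mem_zpowers hg, ← H.card_mul_index]
    nlinarith
  intro a ha b hb hab
  have := pow_injOn_Iio_orderOf (hlt a ha) (hlt b hb) hab
  exact Nat.eq_of_mul_eq_mul_right (m := H.index) (by omega) (by omega)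

section Cyclic

variable [IsCyclic G]

theorem pow_mem_iff_index_dvd (hg : ∀ x, x ∈ Subgroup.zpowers g) (e : ℕ) :
    g ^ e ∈ H ↔ H.index ∣ e := by
  have hq : ∀ y : G ⧸ H, y ∈ Subgroup.zpowers (g : G ⧸ H) := by
    rintro ⟨x⟩
    obtain ⟨i, rfl⟩ := hg x
    exact ⟨i, rfl⟩
  rw [← QuotientGroup.eq_one_iff, QuotientGroup.mk_pow, ← orderOf_dvd_iff_pow_eq_one,
    orderOf_eq_card_of_forall_mem_zpowers hq, H.index_eq_card]

theorem pow_add_mul_index_mem_iff (hg : ∀ x, x ∈ Subgroup.zpowers g) (j i : ℕ) :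
    g ^ (j + i * H.index) ∈ H ↔ H.index ∣ j := by
  rw [pow_mem_iff_index_dvd H hg, Nat.dvd_add_left (dvd_mul_left _ _)]

theorem pow_add_mul_index_mul_pow_mem_iff (hg : ∀ x, x ∈ Subgroup.zpowers g) {j : ℕ} (hj0 : 0 < j)
    (hj : j < H.index) (i c : ℕ) :
    g ^ (j + i * H.index) * g ^ c ∈ H ↔ j = H.index - c % H.index := by
  have hcr := Nat.mod_lt c (hj0.trans hj)
  rw [← pow_add, pow_mem_iff_index_dvd H hg,
    show j + i * H.index + c = j + c % H.index + (i + c / H.index) * H.index by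
      linarith [Nat.mod_add_div c H.index],
    Nat.dvd_add_left (dvd_mul_left _ _)]
  refine ⟨fun h => ?_, fun h => ⟨1, by omega⟩⟩
  have := Nat.eq_of_dvd_of_lt_two_mul (by omega) h (by omega)
  omega

variable [Finite G]

theorem exists_notMem_mul_self_mem_of_even_index (hr : Even H.index) :
    ∃ w ∉ H, w * w ∈ H := by
  obtain ⟨g, hg⟩ := IsCyclic.exists_generator (α := G)
  have hr0 : H.index ≠ 0 := H.index_ne_zero_of_finite
  obtain ⟨a, ha⟩ := hr
  refine ⟨g ^ a, ?_, ?_⟩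
  · rw [pow_mem_iff_index_dvd H hg]
    exact Nat.not_dvd_of_pos_of_lt (by omega) (by omega)
  · rw [← pow_add, pow_mem_iff_index_dvd H hg, ha]

theorem mem_of_inv_eq_self_of_even_card (hm : Even (Nat.card H)) {x : G} (hx : x⁻¹ = x) :
    x ∈ H := by
  obtain ⟨g, hg⟩ := IsCyclic.exists_generator (α := G)
  obtain ⟨e, rfl⟩ := (isOfFinOrder_of_finite g).mem_powers_iff_mem_zpowers.2 (hg x)
  dsimp only at hx
  obtain ⟨a, ha⟩ := hm
  have hn : orderOf g = a * H.index * 2 := by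
    rw [orderOf_eq_card_of_forall_mem_zpowers hg, ← H.card_mul_index, ha]; ring
  have hdvd : orderOf g ∣ e * 2 := by
    rw [orderOf_dvd_iff_pow_eq_one, pow_mul, sq]
    nth_rw 1 [← hx]
    exact inv_mul_cancel _
  rw [pow_mem_iff_index_dvd H hg]
  rw [hn, Nat.mul_dvd_mul_iff_right two_pos] at hdvd
  exact (Dvd.intro_left a rfl).trans hdvd

theorem isRegularSetOfGroup_of_pattern (hg : ∀ x, x ∈ Subgroup.zpowers g) (htop : H ≠ ⊤) {k : ℕ}
    (P : ℕ → ℕ → Prop)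
    (hsymm : ∀ j i, 0 < j → j < H.index → i < Nat.card H → P j i →
      P (H.index - j) (Nat.card H - 1 - i))
    (hrow : ∀ j, 0 < j → j < H.index → {i | i < Nat.card H ∧ P j i}.ncard = k) :
    IsRegularSetOfGroup G H k := by
  set r := H.index
  set m := Nat.card H
  have hr : 0 < r := Nat.pos_of_ne_zero H.index_ne_zero_of_finite
  set S : Set G := {x | ∃ j i, (0 < j ∧ j < r) ∧ (i < m ∧ P j i) ∧ g ^ (j + i * r) = x}
  have hSH : ∀ s ∈ S, s ∉ H := by
    rintro _ ⟨j, i, hj, -, rfl⟩ hs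
    rw [pow_add_mul_index_mem_iff H hg] at hs
    exact Nat.not_dvd_of_pos_of_lt hj.1 hj.2 hs
  have h1 : (1 : G) ∉ S := fun h => hSH 1 h H.one_mem
  have hinv : ∀ s ∈ S, s⁻¹ ∈ S := by
    rintro _ ⟨j, i, hj, hi, rfl⟩
    exact ⟨r - j, m - 1 - i, by omega, ⟨by omega, hsymm j i hj.1 hj.2 hi.1 hi.2⟩,
      (pow_add_mul_index_inv H hg hj.2.le hi.1).symm⟩
  refine ⟨S, h1, hinv, (isRegularSet_cayley_subgroup_iff h1 hinv H k).2
    ⟨htop, hSH, fun v hv => ?_⟩⟩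
  obtain ⟨c, rfl⟩ := (isOfFinOrder_of_finite g).mem_powers_iff_mem_zpowers.2 (hg v)
  have hc : c % r ≠ 0 := fun h =>
    hv ((pow_mem_iff_index_dvd H hg c).2 (Nat.dvd_of_mod_eq_zero h))
  have hcr : c % r < r := Nat.mod_lt _ hr
  have heq : {s ∈ S | s * g ^ c ∈ H} =
      (fun i => g ^ (r - c % r + i * r)) '' {i | i < m ∧ P (r - c % r) i} := by
    ext s
    constructor
    · rintro ⟨⟨j, i, hj, hi, rfl⟩, hs⟩
      obtain rfl := (pow_add_mul_index_mul_pow_mem_iff H hg hj.1 hj.2 i c).1 hs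
      exact ⟨i, hi, rfl⟩
    · rintro ⟨i, hi, rfl⟩
      exact ⟨⟨r - c % r, i, by omega, hi, rfl⟩,
        (pow_add_mul_index_mul_pow_mem_iff H hg (by omega) (by omega) i c).2 rfl⟩
  rw [heq, ((pow_add_mul_index_injOn H hg (by omega)).mono fun i hi => hi.1).ncard_image,
    hrow _ (by omega) (by omega)]

end Cyclic

end GeneratedGroup

def InWindow (r m k j i : ℕ) : Prop :=
  (2 * j < r ∧ i < k) ∨ (r < 2 * j ∧ m - k ≤ i) ∨ (2 * j = r ∧ m - k ≤ 2 * i ∧ 2 * i < m + k)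

theorem InWindow.reflect {r m k j i : ℕ} (hk : Odd k) (hmr : Odd m ∨ Odd r) (hj : j ≤ r)
    (hi : i < m) (h : InWindow r m k j i) : InWindow r m k (r - j) (m - 1 - i) := by
  rw [Nat.odd_iff] at hk
  simp only [Nat.odd_iff] at hmr
  unfold InWindow at *
  omega

theorem ncard_inWindow {r m k : ℕ} (j : ℕ) (hk : Odd k) (hkm : k ≤ m) (hmr : Odd m ∨ Odd r) :
    {i | i < m ∧ InWindow r m k j i}.ncard = k := by
  rw [Nat.odd_iff] at hk
  simp only [Nat.odd_iff] at hmr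
  obtain ⟨a, ha⟩ : ∃ a, {i | i < m ∧ InWindow r m k j i} = Ico a (a + k) := by
    rcases lt_trichotomy (2 * j) r with h | h | h
    · exact ⟨0, by ext i; simp only [InWindow, mem_ofPred_eq, mem_Ico]; omega⟩
    · exact ⟨(m - k) / 2, by ext i; simp only [InWindow, mem_ofPred_eq, mem_Ico]; omega⟩
    · exact ⟨m - k, by ext i; simp only [InWindow, mem_ofPred_eq, mem_Ico]; omega⟩
  rw [ha, ncard_Ico_nat, Nat.add_sub_cancel_left]

theorem stmt14_general {G : Type*} [Group G] [Fintype G] [IsCyclic G] (H : Subgroup G)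
    (htop : H ≠ ⊤)
    (k : ℕ) (hkH : k ≤ Nat.card H) (hko : Odd k) :
    IsRegularSetOfGroup G (H : Set G) k ↔
      (Odd (Nat.card H) ∨ Odd H.index) := by
  constructor
  · intro hreg
    by_contra! hcon
    simp only [Nat.not_odd_iff_even] at hcon
    obtain ⟨w, hw, hw2⟩ := exists_notMem_mul_self_mem_of_even_index H hcon.2
    obtain ⟨x, hxH, hx⟩ := exists_inv_eq_self_notMem_of_isRegularSetOfGroup hko hreg hw hw2
    exact hxH (mem_of_inv_eq_self_of_even_card H hcon.1 hx)
  · intro hodd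
    obtain ⟨g, hg⟩ := IsCyclic.exists_generator (α := G)
    exact isRegularSetOfGroup_of_pattern H hg htop (InWindow H.index (Nat.card H) k)
      (fun j i _ hj hi h => h.reflect hko hodd hj.le hi)
      (fun j _ _ => ncard_inWindow j hko hkH hodd)

theorem stmt14 {G : Type*} [Group G] [Fintype G] [IsCyclic G] (H : Subgroup G)
    (hbot : H ≠ ⊥) (htop : H ≠ ⊤)
    (k : ℕ) (hk1 : 1 ≤ k) (hkH : k ≤ Nat.card H) (hko : Odd k) :
    IsRegularSetOfGroup G (H : Set G) k ↔
      (Odd (Nat.card H) ∨ Odd H.index) :=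
  stmt14_general H htop k hkH hko
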